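/- arXiv:1908.01535 — 2 statements merged into one kernel-verified Lean document; each statement's English description precedes it below -/
import Mathlib

section
/- If X and Y are modular flats of a simple matroid M, then X ∩ Y is a modular flat of M. -/
/-!
Submodularity gives `r(A ∩ Z) + r(A ∪ Z) ≤ r A + r Z` for `A = X ∩ Y`, so only the reverse
inequality is at stake. For a modular flat `Y`, a subset `B ⊆ Y` and a flat `Z`, modularity of
`Y` and `Z` combined with submodularity of `Y` and `B ∪ Z` give
`r(B ∪ Z) - r Z ≥ r(B ∪ (Y ∩ Z)) - r(Y ∩ Z)`. Applying this to `A` and `Z` inside `Y`, and then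
to `A` and the flat `Y ∩ Z` inside `X`, yields `r(A ∪ Z) - r Z ≥ r A - r(A ∩ Z)`.
-/

open scoped Classical

namespace Paper

variable {α : Type*}

/-- The rank of a set in a matroid: the maximum size of an independent subset. -/
noncomputable def mrk (M : Matroid α) (X : Set α) : ℕ :=
  sSup {n | ∃ I, M.Indep I ∧ I ⊆ X ∧ I.ncard = n}

/-- A circuit of a matroid: a minimal dependent subset of the ground set. -/
def Circuit (M : Matroid α) (C : Set α) : Prop :=
  C ⊆ M.E ∧ ¬ M.Indep C ∧ ∀ D ⊂ C, M.Indep D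

/-- A matroid is simple if every subset of the ground set with at most two
elements is independent. -/
def SimpleM (M : Matroid α) : Prop :=
  ∀ X ⊆ M.E, X.ncard ≤ 2 → M.Indep X

/-- A modular flat: a flat `X` with `r X + r Y = r (X ⊓ Y) + r (X ⊔ Y)` for every flat `Y`
(meet of flats is intersection; join is the closure of the union). -/
def ModularFlat (M : Matroid α) (X : Set α) : Prop :=
  M.IsFlat X ∧ ∀ Y, M.IsFlat Y →
    mrk M X + mrk M Y = mrk M (X ∩ Y) + mrk M (M.closure (X ∪ Y))

/-- A matroid is round if its ground set is not the union of two proper flats. -/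
def Round (M : Matroid α) : Prop :=
  ¬ ∃ F₁ F₂ : Set α, M.IsFlat F₁ ∧ M.IsFlat F₂ ∧ F₁ ≠ M.E ∧ F₂ ≠ M.E ∧ M.E = F₁ ∪ F₂

open Set Matroid

lemma _root_.Matroid.IsFlat.inter {M : Matroid α} {X Y : Set α} (hX : M.IsFlat X)
    (hY : M.IsFlat Y) : M.IsFlat (X ∩ Y) := by
  rw [inter_eq_iInter]
  exact IsFlat.iInter (by rintro (_ | _) <;> assumption)

section mrk

lemma cast_mrk (M : Matroid α) [M.RankFinite] (X : Set α) : (mrk M X : ℕ∞) = M.eRk X := by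
  obtain ⟨I, hI⟩ := M.exists_isBasis' X
  have hIfin : I.Finite := hI.indep.finite
  suffices IsGreatest {n | ∃ J, M.Indep J ∧ J ⊆ X ∧ J.ncard = n} I.ncard by
    rw [mrk, this.csSup_eq, hI.eRk_eq_encard, hIfin.cast_ncard_eq]
  refine ⟨⟨I, hI.indep, hI.subset, rfl⟩, ?_⟩
  rintro _ ⟨J, hJ, hJX, rfl⟩
  have hJI : J.encard ≤ I.encard := hI.eRk_eq_encard ▸ hJ.encard_le_eRk_of_subset hJX
  rwa [← hJ.finite.cast_ncard_eq, ← hIfin.cast_ncard_eq, Nat.cast_le] at hJI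

variable {M : Matroid α} [M.RankFinite]

lemma mrk_closure_eq (X : Set α) : mrk M (M.closure X) = mrk M X := by
  exact_mod_cast (cast_mrk M _).trans <| (M.eRk_closure_eq X).trans (cast_mrk M X).symm

lemma mrk_inter_add_mrk_union_le (X Y : Set α) :
    mrk M (X ∩ Y) + mrk M (X ∪ Y) ≤ mrk M X + mrk M Y := by
  have h := M.eRk_inter_add_eRk_union_le X Y
  simp only [← cast_mrk] at h
  exact_mod_cast h

end mrk

section ModularFlat

variable {M : Matroid α} [M.RankFinite] {X Y Z B : Set α}

lemma modularFlat_of_le (hX : M.IsFlat X)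
    (h : ∀ Y, M.IsFlat Y → mrk M X + mrk M Y ≤ mrk M (X ∩ Y) + mrk M (X ∪ Y)) :
    ModularFlat M X := by
  refine ⟨hX, fun Y hY => ?_⟩
  rw [mrk_closure_eq]
  exact le_antisymm (h Y hY) (by linarith [mrk_inter_add_mrk_union_le (M := M) X Y])

lemma ModularFlat.mrk_union_inter_add_mrk_le (hY : ModularFlat M Y) (hBY : B ⊆ Y)
    (hZ : M.IsFlat Z) :
    mrk M (B ∪ (Y ∩ Z)) + mrk M Z ≤ mrk M (B ∪ Z) + mrk M (Y ∩ Z) := by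
  have hmod := hY.2 Z hZ
  rw [mrk_closure_eq] at hmod
  have hsub := mrk_inter_add_mrk_union_le (M := M) Y (B ∪ Z)
  rw [inter_union_distrib_left, inter_eq_right.2 hBY, ← union_assoc, union_eq_left.2 hBY] at hsub
  omega

end ModularFlat

theorem stmt1_general (M : Matroid α) (hfin : M.E.Finite)
    {X Y : Set α} (hX : ModularFlat M X) (hY : ModularFlat M Y) :
    ModularFlat M (X ∩ Y) := by
  have : M.Finite := ⟨hfin⟩
  refine modularFlat_of_le (hX.1.inter hY.1) fun Z hZ => ?_
  have hYZ := hY.mrk_union_inter_add_mrk_le (inter_subset_right (s := X)) hZ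
  have hXYZ := hX.mrk_union_inter_add_mrk_le (inter_subset_left (t := Y)) (hY.1.inter hZ)
  rw [← inter_assoc, union_eq_left.2 inter_subset_left] at hXYZ
  omega

/-- The intersection of two modular flats of a simple matroid is a modular flat. -/
theorem stmt1 (M : Matroid α) (hfin : M.E.Finite) (hsimple : SimpleM M)
    {X Y : Set α} (hX : ModularFlat M X) (hY : ModularFlat M Y) :
    ModularFlat M (X ∩ Y) :=
  stmt1_general M hfin hX hY

end Paper
end

section
/- Let X be a modular coatom of a simple matroid M on ground set E. Then for every element e in E \ X, the interval [e, 1̂] in the lattice of flats of M (equivalently, the simplification of M/e) is isomorphic as a lattice to the interval [0̂, X] (equivalently, the lattice of flats of M|X). -/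
/-!
The maps `F ↦ X ∩ F` and `G ↦ cl (G ∪ {e})` are mutually inverse monotone bijections between
the two intervals. For a flat `F ∋ e`, the coatom `X` together with `e ∉ X` spans, so
`cl (X ∪ F) = E`, and modularity of `X` turns into `r F = r (X ∩ F) + 1`. As `e ∉ cl (X ∩ F)`,
the flat `cl ((X ∩ F) ∪ {e}) ⊆ F` has the rank of `F` and hence equals it; dually, for a flat
`G ⊆ X` the flat `X ∩ cl (G ∪ {e}) ⊇ G` has the rank of `G`.
-/

open scoped Classical

namespace Paper

variable {α : Type*}

open Set Matroid

section rank

variable {M : Matroid α} {S T F G : Set α} {e : α}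

lemma cast_mrk_eq_eRk (hS : M.IsRkFinite S) : (mrk M S : ℕ∞) = M.eRk S := by
  obtain ⟨I, hI, hIfin⟩ := hS.exists_finite_isBasis'
  have hle : ∀ n ∈ {n | ∃ J, M.Indep J ∧ J ⊆ S ∧ J.ncard = n}, n ≤ I.ncard := by
    rintro n ⟨J, hJ, hJS, rfl⟩
    have hJI : J.encard ≤ I.encard := hI.encard_eq_eRk ▸ hJ.encard_le_eRk_of_subset hJS
    have hJfin : J.Finite := finite_of_encard_le_coe (hIfin.cast_ncard_eq ▸ hJI)
    exact_mod_cast hJfin.cast_ncard_eq ▸ hIfin.cast_ncard_eq ▸ hJI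
  have hmrk : mrk M S = I.ncard :=
    le_antisymm (csSup_le ⟨_, I, hI.indep, hI.subset, rfl⟩ hle)
      (le_csSup ⟨_, hle⟩ ⟨I, hI.indep, hI.subset, rfl⟩)
  rw [hmrk, hIfin.cast_ncard_eq, hI.encard_eq_eRk]

variable [M.RankFinite]

lemma mrk_closure (S : Set α) : mrk M (M.closure S) = mrk M S := by
  have h := M.eRk_closure_eq S
  rwa [← cast_mrk_eq_eRk (M.isRkFinite_set _), ← cast_mrk_eq_eRk (M.isRkFinite_set _),
    Nat.cast_inj] at h

lemma mrk_mono (hST : S ⊆ T) : mrk M S ≤ mrk M T := by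
  have h := M.eRk_mono hST
  rwa [← cast_mrk_eq_eRk (M.isRkFinite_set _), ← cast_mrk_eq_eRk (M.isRkFinite_set _),
    Nat.cast_le] at h

lemma mrk_insert_of_notMem_closure (he : e ∈ M.E \ M.closure S) :
    mrk M (insert e S) = mrk M S + 1 := by
  have h := eRk_insert_eq_add_one he
  rwa [← cast_mrk_eq_eRk (M.isRkFinite_set _), ← cast_mrk_eq_eRk (M.isRkFinite_set _),
    ← Nat.cast_one, ← Nat.cast_add, Nat.cast_inj] at h

lemma eq_of_isFlat_subset_of_mrk_le (hF : M.IsFlat F) (hG : M.IsFlat G) (hFG : F ⊆ G)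
    (hr : mrk M G ≤ mrk M F) : F = G := by
  rw [← hF.closure, ← hG.closure]
  refine (M.isRkFinite_set F).closure_eq_closure_of_subset_of_eRk_ge_eRk hFG ?_
  rwa [← cast_mrk_eq_eRk (M.isRkFinite_set _), ← cast_mrk_eq_eRk (M.isRkFinite_set _),
    Nat.cast_le]

end rank

lemma isFlat_inter {M : Matroid α} {F G : Set α} (hF : M.IsFlat F) (hG : M.IsFlat G) :
    M.IsFlat (F ∩ G) := by
  rw [inter_eq_iInter]
  exact IsFlat.iInter fun b ↦ by cases b <;> assumption

section coatom

variable {M : Matroid α} {X F G : Set α} {e : α}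

lemma mem_diff_closure_of_subset (hX : M.IsFlat X) (he : e ∈ M.E \ X) (hGX : G ⊆ X) :
    e ∈ M.E \ M.closure G :=
  ⟨he.1, fun h ↦ he.2 (hX.closure ▸ M.closure_subset_closure hGX h)⟩

variable [M.RankFinite]

lemma closure_union_eq_ground_of_coatom (hX : M.IsFlat X) (hcoatom : mrk M X + 1 = mrk M M.E)
    (he : e ∈ M.E \ X) (heF : e ∈ F) : M.closure (X ∪ F) = M.E := by
  refine eq_of_isFlat_subset_of_mrk_le (isFlat_closure _) M.ground_isFlat
    (M.closure_subset_ground _) ?_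
  have heX : e ∈ M.E \ M.closure X := by rwa [hX.closure]
  calc mrk M M.E = mrk M (insert e X) := by rw [mrk_insert_of_notMem_closure heX, hcoatom]
    _ ≤ mrk M (M.closure (X ∪ F)) :=
      mrk_mono (insert_subset (M.mem_closure_of_mem' (Or.inr heF) he.1)
        (hX.closure.symm.subset.trans (M.closure_subset_closure subset_union_left)))

lemma ModularFlat.mrk_eq_mrk_inter_add_one (hmod : ModularFlat M X)
    (hcoatom : mrk M X + 1 = mrk M M.E) (he : e ∈ M.E \ X) (hF : M.IsFlat F) (heF : e ∈ F) :
    mrk M F = mrk M (X ∩ F) + 1 := by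
  have h := hmod.2 F hF
  rw [closure_union_eq_ground_of_coatom hmod.1 hcoatom he heF, ← hcoatom] at h
  omega

lemma ModularFlat.closure_insert_inter_eq (hmod : ModularFlat M X)
    (hcoatom : mrk M X + 1 = mrk M M.E) (he : e ∈ M.E \ X) (hF : M.IsFlat F) (heF : e ∈ F) :
    M.closure (insert e (X ∩ F)) = F := by
  refine eq_of_isFlat_subset_of_mrk_le (isFlat_closure _) hF
    ((M.closure_subset_closure (insert_subset heF inter_subset_right)).trans_eq hF.closure) ?_
  rw [mrk_closure, mrk_insert_of_notMem_closure (mem_diff_closure_of_subset hmod.1 he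
    inter_subset_left), hmod.mrk_eq_mrk_inter_add_one hcoatom he hF heF]

lemma ModularFlat.inter_closure_insert_eq (hmod : ModularFlat M X)
    (hcoatom : mrk M X + 1 = mrk M M.E) (he : e ∈ M.E \ X) (hG : M.IsFlat G) (hGX : G ⊆ X) :
    X ∩ M.closure (insert e G) = G := by
  have hGE : insert e G ⊆ M.E := insert_subset he.1 (hGX.trans hmod.1.subset_ground)
  have heF : e ∈ M.closure (insert e G) := M.mem_closure_of_mem (mem_insert e G) hGE
  have hrF := hmod.mrk_eq_mrk_inter_add_one hcoatom he (isFlat_closure _) heF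
  rw [mrk_closure, mrk_insert_of_notMem_closure (mem_diff_closure_of_subset hmod.1 he hGX)]
    at hrF
  refine (eq_of_isFlat_subset_of_mrk_le hG (isFlat_inter hmod.1 (isFlat_closure _))
    (subset_inter hGX ((subset_insert e G).trans (M.subset_closure _ hGE))) (by omega)).symm

def ModularFlat.intervalOrderIso (hmod : ModularFlat M X) (hcoatom : mrk M X + 1 = mrk M M.E)
    (he : e ∈ M.E \ X) :
    {F : Set α // M.IsFlat F ∧ e ∈ F} ≃o {F : Set α // M.IsFlat F ∧ F ⊆ X} :=
  Equiv.toOrderIso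
    { toFun F := ⟨X ∩ F.1, isFlat_inter hmod.1 F.2.1, inter_subset_left⟩
      invFun G := ⟨M.closure (insert e G.1), isFlat_closure _, M.mem_closure_of_mem
        (mem_insert e _) (insert_subset he.1 (G.2.2.trans hmod.1.subset_ground))⟩
      left_inv F := Subtype.ext (hmod.closure_insert_inter_eq hcoatom he F.2.1 F.2.2)
      right_inv G := Subtype.ext (hmod.inter_closure_insert_eq hcoatom he G.2.1 G.2.2) }
    (fun _ _ h ↦ inter_subset_inter_right X h)
    (fun _ _ h ↦ M.closure_subset_closure (insert_subset_insert h))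

end coatom

theorem stmt7_general (M : Matroid α) (hfin : M.E.Finite)
    {X : Set α} (hmod : ModularFlat M X) (hcoatom : mrk M X + 1 = mrk M M.E)
    {e : α} (he : e ∈ M.E \ X) :
    Nonempty ({F : Set α // M.IsFlat F ∧ e ∈ F} ≃o {F : Set α // M.IsFlat F ∧ F ⊆ X}) :=
  have : M.Finite := ⟨hfin⟩
  ⟨hmod.intervalOrderIso hcoatom he⟩

/-- For a modular coatom `X` and `e ∈ E \ X`, the interval `[e, 1̂]` of the lattice of
flats is order-isomorphic to the interval `[0̂, X]` (the lattice of flats of `M|X`). -/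
theorem stmt7 (M : Matroid α) (hfin : M.E.Finite) (hsimple : SimpleM M)
    {X : Set α} (hmod : ModularFlat M X) (hcoatom : mrk M X + 1 = mrk M M.E)
    {e : α} (he : e ∈ M.E \ X) :
    Nonempty ({F : Set α // M.IsFlat F ∧ e ∈ F} ≃o {F : Set α // M.IsFlat F ∧ F ⊆ X}) :=
  stmt7_general M hfin hmod hcoatom he

end Paper
end
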